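/- Let n ≥ 1, α₁,…,αₙ > 0, and let μ be the probability measure on ℝⁿ with density e^{−Φ(u)} with respect to Lebesgue measure, where Φ(u) = ½·Σᵢ αᵢuᵢ² + ln(∏ᵢ √(2π/αᵢ)). For f ∈ C_c^∞(ℝⁿ) with ∫ f dμ = 0, set g = f − L_OU f, where L_OU f = Σᵢ (∂²f/∂uᵢ² − αᵢ·uᵢ·∂f/∂uᵢ). Then ∫ f² dμ ≤ ∫ g² dμ, ∫ |∇f|² dμ ≤ 2·∫ g² dμ, and ∫ (L_OU f)² dμ ≤ 4·∫ g² dμ. -/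

import Mathlib

open Real MeasureTheory

/-- Partial derivative in the `i`-th coordinate direction. -/
noncomputable def pd {n : ℕ} (f : EuclideanSpace ℝ (Fin n) → ℝ) (i : Fin n)
    (u : EuclideanSpace ℝ (Fin n)) : ℝ :=
  fderiv ℝ f u (EuclideanSpace.single i 1)

/-- `Φ(u) = ½·Σᵢ αᵢuᵢ² + ln(∏ᵢ √(2π/αᵢ))`, the normalized Gaussian potential. -/
noncomputable def gaussPhi {n : ℕ} (α : Fin n → ℝ) (u : EuclideanSpace ℝ (Fin n)) : ℝ :=
  (1 / 2) * ∑ i, α i * (u i) ^ 2 + Real.log (∏ i, Real.sqrt (2 * π / α i))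

/-- The Gaussian probability measure `μ(du) = e^{−Φ(u)} du` on `ℝⁿ`. -/
noncomputable def gaussMeasure {n : ℕ} (α : Fin n → ℝ) :
    Measure (EuclideanSpace ℝ (Fin n)) :=
  volume.withDensity fun u => ENNReal.ofReal (Real.exp (-(gaussPhi α u)))

/-- The Ornstein–Uhlenbeck operator `L f = Σᵢ (∂²f/∂uᵢ² − αᵢ·uᵢ·∂f/∂uᵢ)`. -/
noncomputable def ouOp {n : ℕ} (α : Fin n → ℝ) (f : EuclideanSpace ℝ (Fin n) → ℝ)
    (u : EuclideanSpace ℝ (Fin n)) : ℝ :=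
  ∑ i, (pd (pd f i) i u - α i * u i * pd f i u)


open Set in
private lemma my_integral_deriv_eq_zero' (g : ℝ → ℝ) (hg : ContDiff ℝ 1 g)
    (hc : HasCompactSupport g) : ∫ t, deriv g t = 0 := by
  have hint : Integrable (deriv g) :=
    (hg.continuous_deriv le_rfl).integrable_of_hasCompactSupport hc.deriv
  have h1 := hc.integral_Iic_deriv_eq hg 0
  have h2 := hc.integral_Ioi_deriv_eq hg 0
  have h3 := intervalIntegral.integral_Iic_add_Ioi (b := (0:ℝ)) (f := deriv g)
    hint.integrableOn hint.integrableOn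
  rw [h1, h2] at h3
  linarith

open Set in
private lemma my_integral_pi_pd_eq_zero {m : ℕ} (G : (Fin (m+1) → ℝ) → ℝ) (hG : ContDiff ℝ 1 G)
    (hc : HasCompactSupport G) (i : Fin (m+1)) :
    ∫ x, fderiv ℝ G x (Pi.single i 1) = 0 := by
  set v : Fin (m+1) → ℝ := Pi.single i 1 with hv
  have hd : HasCompactSupport (fun x => fderiv ℝ G x v) :=
    hc.fderiv_apply (𝕜 := ℝ) v
  have hdc : Continuous (fun x => fderiv ℝ G x v) :=
    ((hG.continuous_fderiv one_ne_zero).clm_apply continuous_const)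
  have mp := (measurePreserving_piFinSuccAbove (fun _ : Fin (m+1) => (volume : Measure ℝ)) i).symm
  set e := MeasurableEquiv.piFinSuccAbove (fun _ : Fin (m+1) => ℝ) i with he
  have hES : ∀ p : ℝ × (Fin m → ℝ), e.symm p = Fin.insertNth (α := fun _ => ℝ) i p.1 p.2 := by
    intro p; rfl
  have hIcomp : (∫ x, fderiv ℝ G x v) =
      ∫ p : ℝ × (Fin m → ℝ), fderiv ℝ G (Fin.insertNth (α := fun _ => ℝ) i p.1 p.2) v := by
    rw [volume_pi, ← mp.integral_comp (MeasurableEquiv.measurableEmbedding _)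
      (fun x => fderiv ℝ G x v)]
    simp_rw [hES]
    rfl
  have hins : Continuous (fun p : ℝ × (Fin m → ℝ) => Fin.insertNth (α := fun _ => ℝ) i p.1 p.2) := by
    apply continuous_pi
    intro j
    rcases eq_or_ne j i with rfl | hj
    · simp only [Fin.insertNth_apply_same]; exact continuous_fst
    · obtain ⟨k, rfl⟩ := Fin.exists_succAbove_eq hj
      simp only [Fin.insertNth_apply_succAbove]
      exact (continuous_apply k).comp continuous_snd
  set F : ℝ × (Fin m → ℝ) → ℝ :=
    fun p => fderiv ℝ G (Fin.insertNth (α := fun _ => ℝ) i p.1 p.2) v with hF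
  have hFc : Continuous F := hdc.comp hins
  have hFsupp : HasCompactSupport F := by
    have hcont : Continuous (fun x : Fin (m+1) → ℝ =>
        ((x i, fun k => x (i.succAbove k)) : ℝ × (Fin m → ℝ))) :=
      (continuous_apply i).prodMk (continuous_pi fun k => continuous_apply _)
    apply HasCompactSupport.intro ((hd.isCompact).image hcont)
    intro p hp
    by_contra h0
    have : Fin.insertNth (α := fun _ => ℝ) i p.1 p.2 ∈ tsupport (fun x => fderiv ℝ G x v) :=
      subset_tsupport _ h0
    exact hp ⟨_, this, by simp⟩
  have hFint : Integrable F := hFc.integrable_of_hasCompactSupport hFsupp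
  rw [hIcomp, Measure.volume_eq_prod, MeasureTheory.integral_prod_symm _ hFint]
  have inner0 : ∀ y : Fin m → ℝ, (∫ t : ℝ, F (t, y)) = 0 := by
    intro y
    set c : Fin (m+1) → ℝ := Fin.insertNth (α := fun _ => ℝ) i 0 y with hcdef
    have hlin : ∀ t : ℝ, Fin.insertNth (α := fun _ => ℝ) i t y = c + t • v := by
      intro t
      funext j
      rcases eq_or_ne j i with rfl | hj
      · simp [hcdef, hv]
      · obtain ⟨k, rfl⟩ := Fin.exists_succAbove_eq hj
        simp [hcdef, hv, Pi.single_eq_of_ne (Fin.succAbove_ne i k)]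
    set g : ℝ → ℝ := fun t => G (c + t • v) with hgdef
    have hgderiv : ∀ t : ℝ, HasDerivAt g (fderiv ℝ G (c + t • v) v) t := by
      intro t
      have h1 : HasDerivAt (fun t : ℝ => c + t • v) v t := by
        simpa using ((hasDerivAt_id t).smul_const v).const_add c
      exact ((hG.differentiable one_ne_zero _).hasFDerivAt).comp_hasDerivAt t h1
    have hgC : ContDiff ℝ 1 g :=
      hG.comp (contDiff_const.add (contDiff_id.smul contDiff_const))
    obtain ⟨R, hR⟩ := hc.isBounded.subset_closedBall 0
    have hgsupp : HasCompactSupport g := by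
      apply HasCompactSupport.intro (isCompact_Icc (a := -R) (b := R))
      intro t ht
      by_contra hg0
      have hmem : c + t • v ∈ Metric.closedBall 0 R :=
        hR (subset_tsupport _ (by simpa [hgdef] using hg0))
      have h1 : |t| ≤ R := by
        have h2 : |(c + t • v) i| ≤ ‖c + t • v‖ := by
          simpa using norm_le_pi_norm (c + t • v) i
        have h3 : (c + t • v) i = t := by
          rw [← hlin t]; simp
        rw [h3] at h2
        simpa [mem_closedBall_zero_iff] using h2.trans (mem_closedBall_zero_iff.mp hmem)
      exact ht ⟨(abs_le.mp h1).1, (abs_le.mp h1).2⟩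
    have : (∫ t : ℝ, F (t, y)) = ∫ t : ℝ, deriv g t := by
      congr 1
      funext t
      rw [(hgderiv t).deriv]
      simp only [hF, hlin t]
    rw [this]
    exact my_integral_deriv_eq_zero' g hgC hgsupp
  simp only [inner0, integral_zero]

private lemma my_integral_pd_eq_zero {n : ℕ} (G : EuclideanSpace ℝ (Fin n) → ℝ)
    (hG : ContDiff ℝ 1 G) (hc : HasCompactSupport G) (i : Fin n) : ∫ u, pd G i u = 0 := by
  cases n with
  | zero => exact i.elim0
  | succ m =>
    set ψ := (EuclideanSpace.equiv (Fin (m+1)) ℝ).symm with hψ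
    set H : (Fin (m+1) → ℝ) → ℝ := fun x => G (ψ x) with hH
    have hHC : ContDiff ℝ 1 H := hG.comp ψ.contDiff
    have hHsupp : HasCompactSupport H := hc.comp_homeomorph ψ.toHomeomorph
    have hfd : ∀ x, fderiv ℝ H x (Pi.single i 1) = pd G i (ψ x) := by
      intro x
      have hcomp : fderiv ℝ H x = (fderiv ℝ G (ψ x)).comp
          (ψ : (Fin (m+1) → ℝ) →L[ℝ] EuclideanSpace ℝ (Fin (m+1))) := by
        rw [hH]
        have := fderiv_comp (𝕜 := ℝ) x (hG.differentiable one_ne_zero (ψ x)) ψ.differentiableAt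
        rw [Function.comp_def] at this
        rw [this, ψ.fderiv]
      rw [hcomp]
      rfl
    have mp := (EuclideanSpace.volume_preserving_symm_measurableEquiv_toLp (Fin (m+1))).symm
    have key : (∫ u, pd G i u) =
        ∫ x : Fin (m+1) → ℝ, pd G i ((MeasurableEquiv.toLp 2 (Fin (m+1) → ℝ)).symm.symm x) := by
      rw [mp.integral_comp (MeasurableEquiv.measurableEmbedding _) (fun u => pd G i u)]
    rw [key]
    have hcongr : ∀ x : Fin (m+1) → ℝ,
        pd G i ((MeasurableEquiv.toLp 2 (Fin (m+1) → ℝ)).symm.symm x)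
        = fderiv ℝ H x (Pi.single i 1) := by
      intro x; rw [hfd x]; rfl
    simp only [hcongr]
    exact my_integral_pi_pd_eq_zero H hHC hHsupp i

private lemma my_pd_mul {n : ℕ} {a b : EuclideanSpace ℝ (Fin n) → ℝ} {i : Fin n}
    {u : EuclideanSpace ℝ (Fin n)}
    (ha : DifferentiableAt ℝ a u) (hb : DifferentiableAt ℝ b u) :
    pd (fun v => a v * b v) i u = pd a i u * b u + a u * pd b i u := by
  unfold pd
  rw [show (fun v => a v * b v) = a * b from rfl, fderiv_mul ha hb]
  simp only [ContinuousLinearMap.add_apply, ContinuousLinearMap.smul_apply, smul_eq_mul]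
  ring

private lemma my_contDiff_gaussPhi {n : ℕ} (α : Fin n → ℝ) : ContDiff ℝ (⊤ : ℕ∞) (gaussPhi α) := by
  unfold gaussPhi
  apply ContDiff.add _ contDiff_const
  apply ContDiff.mul contDiff_const
  apply ContDiff.sum
  intro j _
  exact contDiff_const.mul (((EuclideanSpace.proj (𝕜 := ℝ) j).contDiff).pow 2)

private lemma my_gaussPhi_hasFDerivAt {n : ℕ} (α : Fin n → ℝ) (u : EuclideanSpace ℝ (Fin n)) :
    HasFDerivAt (gaussPhi α)
      ((1/2 : ℝ) • ∑ j, α j • ((2 * u j) •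
        (EuclideanSpace.proj j : EuclideanSpace ℝ (Fin n) →L[ℝ] ℝ))) u := by
  have hsq : ∀ j : Fin n, HasFDerivAt (fun v : EuclideanSpace ℝ (Fin n) => (v j)^2)
      ((2 * u j) • (EuclideanSpace.proj j : EuclideanSpace ℝ (Fin n) →L[ℝ] ℝ)) u := by
    intro j
    have h := ((EuclideanSpace.proj (𝕜 := ℝ) j).hasFDerivAt (x := u)).mul
      ((EuclideanSpace.proj (𝕜 := ℝ) j).hasFDerivAt (x := u))
    refine (h.congr_of_eventuallyEq (Filter.Eventually.of_forall fun v => ?_)).congr_fderiv ?_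
    · simp [pow_two]
    · simp [two_mul, add_smul]
  have hsum := HasFDerivAt.sum (fun j (_ : j ∈ Finset.univ) => (hsq j).const_mul (α j))
  have h2 := (hsum.const_mul (1/2 : ℝ)).add_const (Real.log (∏ i, Real.sqrt (2 * π / α i)))
  exact h2.congr_of_eventuallyEq (Filter.Eventually.of_forall fun x => by
    simp [gaussPhi, Finset.sum_apply])

private lemma my_pd_gaussPhi {n : ℕ} (α : Fin n → ℝ) (i : Fin n) (u : EuclideanSpace ℝ (Fin n)) :
    pd (gaussPhi α) i u = α i * u i := by
  unfold pd
  rw [(my_gaussPhi_hasFDerivAt α u).fderiv]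
  simp only [ContinuousLinearMap.smul_apply, ContinuousLinearMap.sum_apply,
    PiLp.proj_apply, EuclideanSpace.single_apply, smul_eq_mul]
  rw [Finset.sum_eq_single i]
  · simp; ring
  · intro j _ hj; simp [hj]
  · simp

private lemma my_pd_exp_neg_gaussPhi {n : ℕ} (α : Fin n → ℝ) (i : Fin n)
    (u : EuclideanSpace ℝ (Fin n)) :
    pd (fun v => Real.exp (-(gaussPhi α v))) i u
      = -(α i * u i) * Real.exp (-(gaussPhi α u)) := by
  have h := ((my_gaussPhi_hasFDerivAt α u).neg).exp
  unfold pd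
  rw [show (fun v => Real.exp (-(gaussPhi α v))) = (fun x => Real.exp ((-gaussPhi α) x)) from rfl,
    h.fderiv]
  have hthis := my_pd_gaussPhi α i u
  unfold pd at hthis
  rw [(my_gaussPhi_hasFDerivAt α u).fderiv] at hthis
  simp only [ContinuousLinearMap.smul_apply, ContinuousLinearMap.neg_apply,
    smul_eq_mul] at hthis ⊢
  rw [hthis]
  simp only [Pi.neg_apply]
  ring

private lemma my_contDiff_pd {n : ℕ} {f : EuclideanSpace ℝ (Fin n) → ℝ}
    (hf : ContDiff ℝ (⊤ : ℕ∞) f) (i : Fin n) : ContDiff ℝ (⊤ : ℕ∞) (pd f i) :=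
  (hf.fderiv_right (by simp)).clm_apply contDiff_const

private lemma my_pd_eq_zero_of_nmem {n : ℕ} {f : EuclideanSpace ℝ (Fin n) → ℝ} {i : Fin n}
    {u : EuclideanSpace ℝ (Fin n)} (hu : u ∉ tsupport f) : pd f i u = 0 := by
  have : fderiv ℝ f u = 0 := by
    by_contra h
    exact hu (support_fderiv_subset ℝ (by simpa [Function.mem_support] using h))
  simp [pd, this]

private lemma my_tsupport_pd_subset {n : ℕ} {f : EuclideanSpace ℝ (Fin n) → ℝ} {i : Fin n} :
    tsupport (pd f i) ⊆ tsupport f := by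
  apply closure_minimal _ (isClosed_closure)
  intro u hu
  by_contra h
  exact (Function.mem_support.mp hu) (my_pd_eq_zero_of_nmem h)


/-- for `f ∈ C_c^∞(ℝⁿ)` with `∫ f dμ = 0` and `g = f − L_OU f`,
one has `∫ f² dμ ≤ ∫ g² dμ`, `∫ |∇f|² dμ ≤ 2∫ g² dμ` and
`∫ (L_OU f)² dμ ≤ 4∫ g² dμ`. -/
theorem stmt_16 (n : ℕ) (hn : 1 ≤ n) (α : Fin n → ℝ) (hα : ∀ i, 0 < α i)
    (f : EuclideanSpace ℝ (Fin n) → ℝ)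
    (hf : ContDiff ℝ (⊤ : ℕ∞) f) (hsupp : HasCompactSupport f)
    (hmean : ∫ u, f u ∂(gaussMeasure α) = 0) :
    (∫ u, (f u) ^ 2 ∂(gaussMeasure α)) ≤
      (∫ u, (f u - ouOp α f u) ^ 2 ∂(gaussMeasure α)) ∧
    (∫ u, (∑ i, (pd f i u) ^ 2) ∂(gaussMeasure α)) ≤
      2 * (∫ u, (f u - ouOp α f u) ^ 2 ∂(gaussMeasure α)) ∧
    (∫ u, (ouOp α f u) ^ 2 ∂(gaussMeasure α)) ≤
      4 * (∫ u, (f u - ouOp α f u) ^ 2 ∂(gaussMeasure α)) := by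
  classical
  set w : EuclideanSpace ℝ (Fin n) → ℝ := fun u => Real.exp (-(gaussPhi α u)) with hw
  have hwpos : ∀ u, 0 < w u := fun u => Real.exp_pos _
  have hwsmooth : ContDiff ℝ (⊤ : ℕ∞) w := Real.contDiff_exp.comp (my_contDiff_gaussPhi α).neg
  have hwcont : Continuous w := hwsmooth.continuous
  have hwdiff : Differentiable ℝ w := hwsmooth.differentiable (by simp)
  have hfdiff : Differentiable ℝ f := hf.differentiable (by simp)
  have hpdC : ∀ i, ContDiff ℝ (⊤ : ℕ∞) (pd f i) := fun i => my_contDiff_pd hf i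
  have hpd2C : ∀ i, ContDiff ℝ (⊤ : ℕ∞) (pd (pd f i) i) := fun i => my_contDiff_pd (hpdC i) i
  have hproj : ∀ i : Fin n, Continuous (fun u : EuclideanSpace ℝ (Fin n) => u i) :=
    fun i => (EuclideanSpace.proj (𝕜 := ℝ) i).continuous
  have hLcont : Continuous (ouOp α f) := by
    unfold ouOp
    apply continuous_finset_sum
    intro i _
    exact ((hpd2C i).continuous).sub ((continuous_const.mul (hproj i)).mul (hpdC i).continuous)
  have hf0 : ∀ u, u ∉ tsupport f → f u = 0 := fun u hu => image_eq_zero_of_notMem_tsupport hu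
  have hpd0 : ∀ (i : Fin n) u, u ∉ tsupport f → pd f i u = 0 :=
    fun i u hu => my_pd_eq_zero_of_nmem hu
  have hpd20 : ∀ (i : Fin n) u, u ∉ tsupport f → pd (pd f i) i u = 0 := fun i u hu =>
    my_pd_eq_zero_of_nmem (fun h => hu (my_tsupport_pd_subset h))
  have hL0 : ∀ u, u ∉ tsupport f → ouOp α f u = 0 := by
    intro u hu; unfold ouOp
    apply Finset.sum_eq_zero; intro i _
    rw [hpd20 i u hu, hpd0 i u hu]; ring
  have conv : ∀ h : EuclideanSpace ℝ (Fin n) → ℝ,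
      (∫ u, h u ∂(gaussMeasure α)) = ∫ u, h u * w u := by
    intro h
    have hmeas : Measurable (fun u : EuclideanSpace ℝ (Fin n) => (w u).toNNReal) :=
      hwcont.measurable.real_toNNReal
    have hrw : gaussMeasure α = volume.withDensity (fun u => ((w u).toNNReal : ENNReal)) := by
      unfold gaussMeasure
      congr 1
    rw [hrw, integral_withDensity_eq_integral_smul hmeas]
    congr 1
    funext u
    rw [NNReal.smul_def, Real.coe_toNNReal _ (hwpos u).le, smul_eq_mul, mul_comm]
  have integ : ∀ h : EuclideanSpace ℝ (Fin n) → ℝ, Continuous h →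
      (∀ u, u ∉ tsupport f → h u = 0) → Integrable (fun u => h u * w u) := by
    intro h hc h0
    exact (hc.mul hwcont).integrable_of_hasCompactSupport
      (HasCompactSupport.intro hsupp (fun u hu => by rw [Pi.mul_apply, h0 u hu, zero_mul]))
  have ibp : ∀ i : Fin n,
      (∫ u, (f u * (pd (pd f i) i u - α i * u i * pd f i u) + (pd f i u)^2) * w u) = 0 := by
    intro i
    have hGC : ContDiff ℝ 1 (fun v => f v * pd f i v * w v) :=
      ((hf.mul (hpdC i)).mul hwsmooth).of_le (by simp)
    have hGsupp : HasCompactSupport (fun v => f v * pd f i v * w v) :=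
      HasCompactSupport.intro hsupp (fun u hu => by rw [hf0 u hu]; ring)
    have h0 := my_integral_pd_eq_zero _ hGC hGsupp i
    have hpt : ∀ u, pd (fun v => f v * pd f i v * w v) i u
        = (f u * (pd (pd f i) i u - α i * u i * pd f i u) + (pd f i u)^2) * w u := by
      intro u
      rw [my_pd_mul (a := fun v => f v * pd f i v) (b := w)
        ((hfdiff u).mul ((hpdC i).differentiable (by simp) u)) (hwdiff u)]
      rw [my_pd_mul (a := f) (b := pd f i) (hfdiff u) ((hpdC i).differentiable (by simp) u)]
      rw [hw]
      rw [my_pd_exp_neg_gaussPhi α i u]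
      ring
    rw [← h0]
    congr 1
    funext u
    rw [hpt u]
  have I_T : Integrable (fun u => (f u * ouOp α f u) * w u) :=
    integ (fun u => f u * ouOp α f u) (hf.continuous.mul hLcont)
      (fun u hu => by show f u * ouOp α f u = 0; rw [hf0 u hu]; ring)
  have I_B : Integrable (fun u => (∑ i, (pd f i u)^2) * w u) :=
    integ (fun u => ∑ i, (pd f i u)^2)
      (continuous_finset_sum _ fun i _ => ((hpdC i).continuous.pow 2))
      (fun u hu => by
        show (∑ i, (pd f i u)^2) = 0
        exact Finset.sum_eq_zero fun i _ => by rw [hpd0 i u hu]; ring)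
  have I_A : Integrable (fun u => (f u)^2 * w u) :=
    integ (fun u => (f u)^2) (hf.continuous.pow 2) (fun u hu => by show (f u)^2 = 0; rw [hf0 u hu]; ring)
  have I_D : Integrable (fun u => (ouOp α f u)^2 * w u) :=
    integ (fun u => (ouOp α f u)^2) (hLcont.pow 2) (fun u hu => by show (ouOp α f u)^2 = 0; rw [hL0 u hu]; ring)
  have I_i : ∀ i : Fin n, Integrable (fun u =>
      (f u * (pd (pd f i) i u - α i * u i * pd f i u) + (pd f i u)^2) * w u) := by
    intro i
    apply integ
    · exact (hf.continuous.mul (((hpd2C i).continuous).sub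
        ((continuous_const.mul (hproj i)).mul (hpdC i).continuous))).add
        ((hpdC i).continuous.pow 2)
    · intro u hu
      show f u * (pd (pd f i) i u - α i * u i * pd f i u) + (pd f i u)^2 = 0
      rw [hf0 u hu, hpd0 i u hu]; ring
  have key : (∫ u, (f u * ouOp α f u) * w u) + (∫ u, (∑ i, (pd f i u)^2) * w u) = 0 := by
    rw [← integral_add I_T I_B]
    have e1 : (fun u => (f u * ouOp α f u) * w u + (∑ i, (pd f i u)^2) * w u)
        = fun u => ∑ i, ((f u * (pd (pd f i) i u - α i * u i * pd f i u)
            + (pd f i u)^2) * w u) := by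
      funext u
      unfold ouOp
      rw [Finset.mul_sum, Finset.sum_mul, Finset.sum_mul, ← Finset.sum_add_distrib]
      apply Finset.sum_congr rfl
      intro i _
      ring
    calc (∫ u, ((f u * ouOp α f u) * w u + (∑ i, (pd f i u)^2) * w u))
        = ∫ u, ∑ i, ((f u * (pd (pd f i) i u - α i * u i * pd f i u)
            + (pd f i u)^2) * w u) := by rw [e1]
      _ = ∑ i, ∫ u, ((f u * (pd (pd f i) i u - α i * u i * pd f i u)
            + (pd f i u)^2) * w u) := integral_finset_sum _ (fun i _ => I_i i)
      _ = 0 := Finset.sum_eq_zero fun i _ => ibp i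
  have hC : (∫ u, (f u - ouOp α f u)^2 * w u)
      = ((∫ u, (f u)^2 * w u) + (-2 : ℝ) * (∫ u, (f u * ouOp α f u) * w u))
        + (∫ u, (ouOp α f u)^2 * w u) := by
    calc (∫ u, (f u - ouOp α f u)^2 * w u)
        = ∫ u, (((f u)^2 * w u + (-2 : ℝ) * ((f u * ouOp α f u) * w u))
            + (ouOp α f u)^2 * w u) := by
          congr 1
          funext u
          ring
      _ = _ := by
          have I_T2 : Integrable (fun u => (-2 : ℝ) * ((f u * ouOp α f u) * w u)) :=
            I_T.const_mul (-2 : ℝ)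
          have I_AT : Integrable (fun u =>
              (f u)^2 * w u + (-2 : ℝ) * ((f u * ouOp α f u) * w u)) := I_A.add I_T2
          rw [integral_add I_AT I_D, integral_add I_A I_T2, MeasureTheory.integral_const_mul]
  have hA0 : 0 ≤ ∫ u, (f u)^2 * w u :=
    integral_nonneg fun u => mul_nonneg (sq_nonneg _) (hwpos u).le
  have hB0 : 0 ≤ ∫ u, (∑ i, (pd f i u)^2) * w u :=
    integral_nonneg fun u =>
      mul_nonneg (Finset.sum_nonneg fun i _ => sq_nonneg _) (hwpos u).le
  have hD0 : 0 ≤ ∫ u, (ouOp α f u)^2 * w u :=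
    integral_nonneg fun u => mul_nonneg (sq_nonneg _) (hwpos u).le
  refine ⟨?_, ?_, ?_⟩
  · simp only [conv]
    linarith
  · simp only [conv]
    linarith
  · simp only [conv]
    linarith
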